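/- arXiv:2412.19558 — 2 statements merged into one kernel-verified Lean document; each statement's English description precedes it below -/
import Mathlib

section
/- Let 𝔉^x_ω and 𝔊^y_ω be c-irreducible rooted pre-skeletons built over finite preorder skeletons 𝔉 and 𝔊. If Log(𝔉^x_ω) = Log(𝔊^y_ω), then 𝔉^x_1 and 𝔊^y_1 are isomorphic as frames. -/
/-! ## Syntax of tense logic -/

inductive TForm : Type
  | var : ℕ → TForm
  | bot : TForm
  | imp : TForm → TForm → TForm
  | box : TForm → TForm
  | bdia : TForm → TForm
  deriving DecidableEq

namespace TForm

def neg (φ : TForm) : TForm := imp φ bot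

def top : TForm := neg bot

def orf (φ ψ : TForm) : TForm := imp (neg φ) ψ

def andf (φ ψ : TForm) : TForm := neg (imp φ (neg ψ))

def dia (φ : TForm) : TForm := neg (box (neg φ))

def bbox (φ : TForm) : TForm := neg (bdia (neg φ))

def subst (s : ℕ → TForm) : TForm → TForm
  | var n => s n
  | bot => bot
  | imp φ ψ => imp (subst s φ) (subst s ψ)
  | box φ => box (subst s φ)
  | bdia φ => bdia (subst s φ)

/-- Modal degree of a formula. -/
def mdeg : TForm → ℕ
  | var _ => 0
  | bot => 0
  | imp φ ψ => max (mdeg φ) (mdeg ψ)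
  | box φ => mdeg φ + 1
  | bdia φ => mdeg φ + 1

end TForm

open TForm

/-! ## Frames and relational notions -/

/-- `R[U] = {z : ∃ y ∈ U, R y z}`. -/
def Rimg {X : Type*} (R : X → X → Prop) (U : Set X) : Set X := {z | ∃ y ∈ U, R y z}

/-- `R[x]`, the set of `R`-successors of `x`. -/
def rsucc {X : Type*} (R : X → X → Prop) (x : X) : Set X := {y | R x y}

/-- `R̆[x]`, the set of `R`-predecessors of `x`. -/
def rpred {X : Type*} (R : X → X → Prop) (x : X) : Set X := {y | R y x}

/-- `R_♯^k[x]`. -/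
def rsharp {X : Type*} (R : X → X → Prop) : ℕ → X → Set X
  | 0, x => {x}
  | k+1, x => rsharp R k x ∪ Rimg R (rsharp R k x) ∪ Rimg (flip R) (rsharp R k x)

/-- `R_♯^ω[x]`. -/
def rsharpOmega {X : Type*} (R : X → X → Prop) (x : X) : Set X := ⋃ k : ℕ, rsharp R k x

/-- A frame is rooted if it is generated by a single point under `R` and its converse. -/
def Rooted {X : Type*} (R : X → X → Prop) : Prop := ∃ x : X, ∀ y : X, y ∈ rsharpOmega R x

/-- A frame is image-finite if `R_♯^1[x]` is finite for every `x`. -/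
def ImageFinite {X : Type*} (R : X → X → Prop) : Prop := ∀ x : X, (rsharp R 1 x).Finite

/-! ## Semantics -/

def TSat {X : Type*} (R : X → X → Prop) (V : ℕ → Set X) : TForm → Set X
  | .var n => V n
  | .bot => ∅
  | .imp φ ψ => (TSat R V φ)ᶜ ∪ TSat R V ψ
  | .box φ => {x | ∀ y, R x y → y ∈ TSat R V φ}
  | .bdia φ => {x | ∃ y, R y x ∧ y ∈ TSat R V φ}

/-- `φ` is valid at the point `x` of the frame `(X,R)`. -/
def ValidAt {X : Type*} (R : X → X → Prop) (x : X) (φ : TForm) : Prop :=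
  ∀ V : ℕ → Set X, x ∈ TSat R V φ

/-- `φ` is valid in the frame `(X,R)`. -/
def Valid {X : Type*} (R : X → X → Prop) (φ : TForm) : Prop :=
  ∀ (V : ℕ → Set X) (x : X), x ∈ TSat R V φ

/-- The tense logic of a frame. -/
def FrameLog {X : Type*} (R : X → X → Prop) : Set TForm := {φ | Valid R φ}

/-! ## Tense logics -/

/-- `φ` is a substitution instance of a classical propositional tautology. -/
def IsTautInstance (φ : TForm) : Prop :=
  ∀ v : TForm → Prop, ¬ v .bot → (∀ ψ χ, v (.imp ψ χ) ↔ (v ψ → v χ)) → v φ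

/-- A (normal) tense logic. -/
structure TenseLogic (L : Set TForm) : Prop where
  taut_mem : ∀ φ, IsTautInstance φ → φ ∈ L
  adjoint : ∀ φ ψ : TForm, TForm.imp (.bdia φ) ψ ∈ L ↔ TForm.imp φ (.box ψ) ∈ L
  mp : ∀ φ ψ : TForm, TForm.imp φ ψ ∈ L → φ ∈ L → ψ ∈ L
  subst_mem : ∀ φ ∈ L, ∀ s : ℕ → TForm, TForm.subst s φ ∈ L

def Consistent (L : Set TForm) : Prop := TForm.bot ∉ L

/-- A logic is tabular if it is the logic of some finite (nonempty) frame. -/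
def Tabular (L : Set TForm) : Prop :=
  ∃ (X : Type) (_ : Finite X) (_ : Nonempty X) (R : X → X → Prop), L = FrameLog R

/-- A logic is pretabular if it is not tabular while every proper consistent
tense-logic extension of it is tabular. -/
def Pretabular (L : Set TForm) : Prop :=
  ¬ Tabular L ∧
    ∀ L' : Set TForm, TenseLogic L' → L ⊆ L' → L ≠ L' → Consistent L' → Tabular L'

/-- The set of pretabular tense logics extending `L0`. -/
def PTAB (L0 : Set TForm) : Set (Set TForm) :=
  {L | TenseLogic L ∧ L0 ⊆ L ∧ Pretabular L}

/-! ## Some formulas -/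

def bigConj : List TForm → TForm
  | [] => TForm.top
  | φ :: l => andf φ (bigConj l)

def bigDisj : List TForm → TForm
  | [] => TForm.bot
  | φ :: l => orf φ (bigDisj l)

/-- `Δ^k φ`. -/
def tdelta : ℕ → TForm → TForm
  | 0, φ => φ
  | k+1, φ => orf (tdelta k φ) (orf (dia (tdelta k φ)) (TForm.bdia (tdelta k φ)))

/-- `∇^k φ = ¬Δ^k¬φ`. -/
def tnabla (k : ℕ) (φ : TForm) : TForm := neg (tdelta k (neg φ))

/-- `ψ_i = ¬p_0 ∧ ⋯ ∧ ¬p_{i-1} ∧ p_i`. -/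
def tpsi (i : ℕ) : TForm :=
  bigConj (((List.range i).map fun j => neg (var j)) ++ [var i])

/-- `tab^T_n = ¬(Δ^n ψ_0 ∧ ⋯ ∧ Δ^n ψ_n)`. -/
def tabT (n : ℕ) : TForm :=
  neg (bigConj ((List.range (n+1)).map fun i => tdelta n (tpsi i)))

/-! ## General frames -/

structure IsGeneralFrame {X : Type*} (R : X → X → Prop) (A : Set (Set X)) : Prop where
  empty_mem : ∅ ∈ A
  inter_mem : ∀ U ∈ A, ∀ V ∈ A, U ∩ V ∈ A
  compl_mem : ∀ U ∈ A, Uᶜ ∈ A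
  fimg_mem : ∀ U ∈ A, Rimg R U ∈ A
  bimg_mem : ∀ U ∈ A, Rimg (flip R) U ∈ A

def Differentiated {X : Type*} (A : Set (Set X)) : Prop :=
  ∀ x y : X, x ≠ y → ∃ U ∈ A, x ∈ U ∧ y ∉ U

def Tight {X : Type*} (R : X → X → Prop) (A : Set (Set X)) : Prop :=
  ∀ x y : X, ¬ R x y →
    ∃ U ∈ A, ∃ V ∈ A, (x ∈ U ∧ x ∉ Rimg (flip R) V) ∧ (y ∈ V ∧ y ∉ Rimg R U)

/-- Validity in a general frame: truth at all points under all valuations into `A`. -/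
def GValid {X : Type*} (R : X → X → Prop) (A : Set (Set X)) (φ : TForm) : Prop :=
  ∀ V : ℕ → Set X, (∀ n, V n ∈ A) → ∀ x, x ∈ TSat R V φ

/-- Validity at a point of a general frame. -/
def GValidAt {X : Type*} (R : X → X → Prop) (A : Set (Set X)) (x : X) (φ : TForm) : Prop :=
  ∀ V : ℕ → Set X, (∀ n, V n ∈ A) → x ∈ TSat R V φ

/-! ## (Local) t-morphisms -/

/-- Domain of a partial function. -/
def pdom {X Y : Type*} (f : X → Option Y) : Set X := {x | (f x).isSome}

/-- Image of a set under a partial function. -/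
def pimg {X Y : Type*} (f : X → Option Y) (S : Set X) : Set Y := {y | ∃ x ∈ S, f x = some y}

/-- Range of a partial function. -/
def pran {X Y : Type*} (f : X → Option Y) : Set Y := {y | ∃ x, f x = some y}

/-- `f` is a `k`-t-morphism from `((X,R),x)` to `((Y,S),y)`. -/
def IsKTMorphism {X Y : Type*} (R : X → X → Prop) (S : Y → Y → Prop)
    (f : X → Option Y) (x : X) (y : Y) (k : ℕ) : Prop :=
  rsharp R k x ⊆ pdom f ∧ f x = some y ∧
    ∀ z ∈ rsharp R (k-1) x, ∀ z' : Y, f z = some z' →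
      pimg f (rsucc R z) = rsucc S z' ∧ pimg f (rpred R z) = rpred S z'

/-- A (total) t-morphism between frames. -/
def IsTMorphism {X Y : Type*} (R : X → X → Prop) (S : Y → Y → Prop) (f : X → Y) : Prop :=
  ∀ x : X, f '' rsucc R x = rsucc S (f x) ∧ f '' rpred R x = rpred S (f x)

/-! ## Generalized Jankov formulas -/

def finPairs (n : ℕ) : List (Fin n × Fin n) :=
  (List.finRange n).flatMap fun i => (List.finRange n).map fun j => (i, j)

open Classical in
/-- The generalized Jankov formula `𝒥^k(𝔊,y)`, relative to an enumeration
`e : Fin n → Y` of `S_♯^k[y]` with `e 0 = y`. -/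
noncomputable def jankov {Y : Type*} (S : Y → Y → Prop) (k n : ℕ) (e : Fin n → Y) : TForm :=
  andf (andf (TForm.var 0) (tnabla k (bigDisj ((List.finRange n).map fun i => TForm.var i.val))))
    (andf
      (bigConj (((finPairs n).filter fun p => decide (p.1 ≠ p.2)).map fun p =>
        tnabla k (TForm.imp (.var p.1.val) (neg (.var p.2.val)))))
      (andf
        (bigConj (((finPairs n).filter fun p => decide (S (e p.1) (e p.2))).map fun p =>
          tnabla (k-1) (andf (TForm.imp (.var p.1.val) (dia (.var p.2.val)))
            (TForm.imp (.var p.2.val) (.bdia (.var p.1.val))))))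
        (bigConj (((finPairs n).filter fun p => decide (¬ S (e p.1) (e p.2))).map fun p =>
          tnabla (k-1) (andf (TForm.imp (.var p.1.val) (neg (dia (.var p.2.val))))
            (TForm.imp (.var p.2.val) (neg (.bdia (.var p.1.val)))))))))

/-! ## Bounded-parameter formulas -/

/-- `bz_n = Δ^{n+1}p → Δ^n p`. -/
def bz (n : ℕ) : TForm := TForm.imp (tdelta (n+1) (var 0)) (tdelta n (var 0))

def offDiag (n : ℕ) : List (Fin n × Fin n) :=
  (finPairs n).filter fun p => decide (p.1 ≠ p.2)

/-- `bw^+_n`. -/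
def bwp (n : ℕ) : TForm :=
  TForm.imp (bigConj ((List.finRange (n+1)).map fun i => dia (var i.val)))
    (bigDisj ((offDiag (n+1)).map fun p =>
      dia (andf (var p.1.val) (orf (var p.2.val) (dia (var p.2.val))))))

/-- `bw^-_n`. -/
def bwm (n : ℕ) : TForm :=
  TForm.imp (bigConj ((List.finRange (n+1)).map fun i => TForm.bdia (var i.val)))
    (bigDisj ((offDiag (n+1)).map fun p =>
      TForm.bdia (andf (var p.1.val) (orf (var p.2.val) (TForm.bdia (var p.2.val))))))

/-- `bd_n` (with `bd_0 := ⊤`, unused). -/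
def bd : ℕ → TForm
  | 0 => TForm.top
  | 1 => TForm.imp (dia (box (var 0))) (var 0)
  | k+2 => TForm.imp (dia (andf (box (var (k+1))) (neg (bd (k+1))))) (var (k+1))

/-- Every strict chain inside `R[x]` has length at most `n` (`dep(x) ≤ n`). -/
def depLe {X : Type*} (R : X → X → Prop) (x : X) (n : ℕ) : Prop :=
  ∀ (m : ℕ) (c : Fin m → X), (∀ i, R x (c i)) →
    (∀ i j : Fin m, i < j → R (c i) (c j) ∧ ¬ R (c j) (c i)) → m ≤ n

/-- Every antichain inside `R[x]` has size at most `n` (`wid^+(x) ≤ n`). -/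
def widPlusLe {X : Type*} (R : X → X → Prop) (x : X) (n : ℕ) : Prop :=
  ∀ (m : ℕ) (c : Fin m → X), Function.Injective c → (∀ i, R x (c i)) →
    (∀ i j : Fin m, i ≠ j → ¬ R (c i) (c j)) → m ≤ n

/-- `wid^-(x) ≤ n`. -/
def widMinusLe {X : Type*} (R : X → X → Prop) (x : X) (n : ℕ) : Prop :=
  widPlusLe (flip R) x n

/-- `zdg(x) ≤ n`. -/
def zdgLe {X : Type*} (R : X → X → Prop) (x : X) (n : ℕ) : Prop :=
  rsharp R n x = rsharpOmega R x

/-! ## Axiomatically presented logics -/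

/-- The least tense logic containing `Γ` (i.e. `K_t ⊕ Γ`). -/
def TLogicGen (Γ : Set TForm) : Set TForm := ⋂₀ {L : Set TForm | TenseLogic L ∧ Γ ⊆ L}

def axT : TForm := TForm.imp (box (var 0)) (var 0)

def ax4 : TForm := TForm.imp (box (var 0)) (box (box (var 0)))

/-- `S4_t`. -/
def S4t : Set TForm := TLogicGen {axT, ax4}

/-- `S4BP^{k,l}_{n,m}` with all parameters finite. -/
def S4BPfin (k l n m : ℕ) : Set TForm := TLogicGen {axT, ax4, bd k, bz l, bwp n, bwm m}

/-- `S4BP^{k,ω}_{n,m}` (no bound on z-degree: `bz_ω = ⊤`). -/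
def S4BPko (k n m : ℕ) : Set TForm := TLogicGen {axT, ax4, bd k, bwp n, bwm m}

/-- `S4.3_t = S4BP^{ω,1}_{1,1}`. -/
def S43t : Set TForm := TLogicGen {axT, ax4, bz 1, bwp 1, bwm 1}

/-- `S4BP^{2,ω}_{2,2}`. -/
def S4BP2w22 : Set TForm := TLogicGen {axT, ax4, bd 2, bwp 2, bwm 2}

/-- `S4BP^{2,ω}_{2,3}`. -/
def S4BP2w23 : Set TForm := TLogicGen {axT, ax4, bd 2, bwp 2, bwm 3}

/-- `S5_t = S4_t ⊕ (◇p → □◇p)`. -/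
def S5t : Set TForm := TLogicGen {axT, ax4, TForm.imp (dia (var 0)) (box (dia (var 0)))}

/-- Kripke completeness: `L` is the logic of the class of Kripke frames validating `L`. -/
def KripkeComplete (L : Set TForm) : Prop :=
  L = {φ | ∀ (X : Type) (R : X → X → Prop), Nonempty X → (∀ ψ ∈ L, Valid R ψ) → Valid R φ}

/-- The finite model property: `L` is the logic of the class of finite frames validating `L`. -/
def HasFMP (L : Set TForm) : Prop :=
  L = {φ | ∀ (X : Type) (R : X → X → Prop), Finite X → Nonempty X →
        (∀ ψ ∈ L, Valid R ψ) → Valid R φ}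

/-! ## Skeletons and pre-skeletons -/

/-- A skeleton: a preorder frame all of whose clusters are singletons. -/
def IsSkeleton {X : Type*} (R : X → X → Prop) : Prop :=
  Reflexive R ∧ Transitive R ∧ ∀ y z : X, R y z → R z y → y = z

/-- Membership in the blown-up cluster `C^x_λ = {x} ∪ N`. -/
def inCl {X N : Type*} (x : X) : X ⊕ N → Prop
  | .inl u => u = x
  | .inr _ => True

/-- The relation of the pre-skeleton `𝔉^x_λ`, where the fresh points are indexed by `N`:
`R ∪ (C^x_λ × R[x]) ∪ (R̆[x] × C^x_λ) ∪ (C^x_λ × C^x_λ)`. -/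
def preRel {X : Type*} (N : Type*) (R : X → X → Prop) (x : X) : X ⊕ N → X ⊕ N → Prop :=
  fun a b =>
    (∃ u v, a = Sum.inl u ∧ b = Sum.inl v ∧ R u v) ∨
    (inCl x a ∧ ∃ v, b = Sum.inl v ∧ R x v) ∨
    (inCl x b ∧ ∃ u, a = Sum.inl u ∧ R u x) ∨
    (inCl x a ∧ inCl x b)

/-- c-irreducibility of the pre-skeleton `𝔉^x_1`: every t-morphic image of `𝔉^x_1` is
isomorphic to `𝔉^x_1` or is a t-morphic image of `𝔉`. -/
def CIrrOne {X : Type} (R : X → X → Prop) (x : X) : Prop :=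
  ∀ (Y : Type) (S : Y → Y → Prop),
    (∃ f : X ⊕ Fin 1 → Y, Function.Surjective f ∧ IsTMorphism (preRel (Fin 1) R x) S f) →
    ((∃ g : X ⊕ Fin 1 → Y, Function.Bijective g ∧ IsTMorphism (preRel (Fin 1) R x) S g) ∨
     (∃ h : X → Y, Function.Surjective h ∧ IsTMorphism R S h))

/-- c-irreducibility of the pre-skeleton `𝔉^x_ω`: every t-morphic image of `𝔉^x_ω` is
isomorphic to `𝔉^x_m` for some `0 < m ≤ ω` or is a t-morphic image of `𝔉`. -/
def CIrrOmega {X : Type} (R : X → X → Prop) (x : X) : Prop :=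
  ∀ (Y : Type) (S : Y → Y → Prop),
    (∃ f : X ⊕ ℕ → Y, Function.Surjective f ∧ IsTMorphism (preRel ℕ R x) S f) →
    ((∃ m : ℕ, 0 < m ∧ ∃ g : X ⊕ Fin m → Y, Function.Bijective g ∧
        IsTMorphism (preRel (Fin m) R x) S g) ∨
     (∃ g : X ⊕ ℕ → Y, Function.Bijective g ∧ IsTMorphism (preRel ℕ R x) S g) ∨
     (∃ h : X → Y, Function.Surjective h ∧ IsTMorphism R S h))

/-! ## Chains, garlands -/

/-- The chain `𝔠_n = ({0,…,n-1}, ≥)`. -/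
def chainR (n : ℕ) : Fin n → Fin n → Prop := fun i j => j ≤ i

/-- `L^↑ = ⋂_{n ≥ 1} Log(𝔠_n)`, the tense logic of all finite chains. -/
def Lup : Set TForm := ⋂ n : ℕ, FrameLog (chainR (n+1))

def Lcirc : Set TForm := FrameLog (preRel ℕ (chainR 1) (0 : Fin 1))

def Lplus : Set TForm := FrameLog (preRel ℕ (chainR 2) (1 : Fin 2))

def Lminus : Set TForm := FrameLog (preRel ℕ (chainR 2) (0 : Fin 2))

def Lpm : Set TForm := FrameLog (preRel ℕ (chainR 3) (1 : Fin 3))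

/-- The frame `𝔊_ℤ`. -/
def Rz : ℤ → ℤ → Prop := fun i j => i = j ∨ (Odd i ∧ (j = i - 1 ∨ j = i + 1))

/-- `Ga = Log(𝔊_ℤ)`. -/
def Ga : Set TForm := FrameLog Rz

/-- The garland `𝔊_n` on `{0,…,n}`. -/
def garR (n : ℕ) : Fin (n+1) → Fin (n+1) → Prop :=
  fun i j => i = j ∨ (Odd (i : ℕ) ∧ ((j : ℕ) + 1 = (i : ℕ) ∨ (j : ℕ) = (i : ℕ) + 1))

/-! ## Generalized Thue–Morse sequences -/

/-- Endpoints `(lo, hi)` of the domain of the stage-`k` approximation `χ^f_k`. -/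
def tmBnd : ℕ → ℤ × ℤ
  | 0 => (0, 2)
  | k+1 =>
      let ab := tmBnd k
      if k % 2 = 0 then (ab.1, ab.2 + (ab.2 - ab.1 + 1) + 1)
      else (ab.1 - (ab.2 - ab.1 + 1) - 1, ab.2)

/-- Value of the stage-`k` approximation `χ^f_k` (junk outside its domain). -/
def tmVal (f : ℕ → Bool) : ℕ → ℤ → Bool
  | 0, j => decide (j = 2)
  | k+1, j =>
      let a := (tmBnd k).1
      let b := (tmBnd k).2
      if k % 2 = 0 then
        if j ≤ b then tmVal f k j
        else if j = b + 1 then f k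
        else ! tmVal f k (j - (b + 2) + a)
      else
        if a ≤ j then tmVal f k j
        else if j = a - 1 then f k
        else ! tmVal f k (j + (b - a + 1) + 1)

/-- The generalized Thue–Morse sequence `χ^f : ℤ → Bool` generated by `f`
(evaluated at a stage whose domain certainly contains the argument). -/
def chi (f : ℕ → Bool) : ℤ → Bool := fun j => tmVal f (2 * j.natAbs + 2) j

/-- `α` is finitely perfect: for every finite subsequence `β = α↾[c,d]` there is `n ∈ ω`
such that `β` embeds into every finite subsequence `ζ = α↾[c',d']` with `|dom ζ| > n`. -/
def FinitelyPerfect (α : ℤ → Bool) : Prop :=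
  ∀ c d : ℤ, ∃ n : ℕ, ∀ c' d' : ℤ, (n : ℤ) < d' - c' + 1 →
    ∃ s : ℤ, c' ≤ c + s ∧ d + s ≤ d' ∧ ∀ j : ℤ, c ≤ j → j ≤ d → α j = α (j + s)

/-! ### Auxiliary lemmas -/

set_option linter.unnecessarySimpa false

section Aux

variable {X Y W Z : Type*}

open TForm Set

/-! #### Semantics basics -/

lemma TSat_neg (R : X → X → Prop) (V : ℕ → Set X) (φ : TForm) :
    TSat R V (neg φ) = (TSat R V φ)ᶜ := by
  simp [TForm.neg, TSat]

lemma mem_TSat_neg {R : X → X → Prop} {V : ℕ → Set X} {φ : TForm} {w : X} :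
    w ∈ TSat R V (neg φ) ↔ w ∉ TSat R V φ := by
  simp [TSat_neg]

lemma mem_TSat_imp {R : X → X → Prop} {V : ℕ → Set X} {φ ψ : TForm} {w : X} :
    w ∈ TSat R V (TForm.imp φ ψ) ↔ (w ∈ TSat R V φ → w ∈ TSat R V ψ) := by
  simp only [TSat, Set.mem_union, Set.mem_compl_iff]
  tauto

lemma mem_TSat_andf {R : X → X → Prop} {V : ℕ → Set X} {φ ψ : TForm} {w : X} :
    w ∈ TSat R V (andf φ ψ) ↔ w ∈ TSat R V φ ∧ w ∈ TSat R V ψ := by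
  simp only [TForm.andf, mem_TSat_neg, mem_TSat_imp]
  tauto

lemma mem_TSat_orf {R : X → X → Prop} {V : ℕ → Set X} {φ ψ : TForm} {w : X} :
    w ∈ TSat R V (orf φ ψ) ↔ w ∈ TSat R V φ ∨ w ∈ TSat R V ψ := by
  simp only [TForm.orf, mem_TSat_imp, mem_TSat_neg]
  tauto

lemma mem_TSat_dia {R : X → X → Prop} {V : ℕ → Set X} {φ : TForm} {w : X} :
    w ∈ TSat R V (dia φ) ↔ ∃ u, R w u ∧ u ∈ TSat R V φ := by
  simp [TForm.dia, TSat, TSat_neg, mem_TSat_neg]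

lemma mem_TSat_bdia {R : X → X → Prop} {V : ℕ → Set X} {φ : TForm} {w : X} :
    w ∈ TSat R V (TForm.bdia φ) ↔ ∃ u, R u w ∧ u ∈ TSat R V φ := by
  simp [TSat]

lemma mem_bigConj {R : X → X → Prop} {V : ℕ → Set X} {l : List TForm} {w : X} :
    w ∈ TSat R V (bigConj l) ↔ ∀ φ ∈ l, w ∈ TSat R V φ := by
  induction l with
  | nil => simp [bigConj, TForm.top, TSat_neg, TSat]
  | cons φ l ih => simp [bigConj, mem_TSat_andf, ih]

lemma mem_bigDisj {R : X → X → Prop} {V : ℕ → Set X} {l : List TForm} {w : X} :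
    w ∈ TSat R V (bigDisj l) ↔ ∃ φ ∈ l, w ∈ TSat R V φ := by
  induction l with
  | nil => simp [bigDisj, TSat]
  | cons φ l ih => simp [bigDisj, mem_TSat_orf, ih]

/-! #### rsharp lemmas -/

lemma self_mem_rsharp (R : X → X → Prop) (k : ℕ) (x : X) : x ∈ rsharp R k x := by
  induction k with
  | zero => simp [rsharp]
  | succ k ih => exact Or.inl (Or.inl ih)

lemma rsharp_mono_succ (R : X → X → Prop) (k : ℕ) (x : X) :
    rsharp R k x ⊆ rsharp R (k+1) x := fun _ h => Or.inl (Or.inl h)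

lemma rsharp_mono (R : X → X → Prop) {k l : ℕ} (h : k ≤ l) (x : X) :
    rsharp R k x ⊆ rsharp R l x := by
  induction l with
  | zero => simpa [Nat.le_zero.mp h] using subset_rfl
  | succ l ih =>
      rcases Nat.lt_or_ge k (l+1) with h' | h'
      · exact (ih (Nat.lt_succ_iff.mp h')).trans (rsharp_mono_succ R l x)
      · have : k = l + 1 := le_antisymm h h'
        simp [this]

lemma rsharp_add {R : X → X → Prop} {j : ℕ} {a b : X} (h : a ∈ rsharp R j b) (k : ℕ) :
    rsharp R k a ⊆ rsharp R (j+k) b := by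
  induction k with
  | zero =>
      intro z hz
      rcases hz with rfl
      simpa using h
  | succ k ih =>
      intro z hz
      rcases hz with (hz | hz) | hz
      · exact rsharp_mono R (by omega) b (ih hz)
      · rcases hz with ⟨v, hv, hvz⟩
        exact Or.inl (Or.inr ⟨v, ih hv, hvz⟩)
      · rcases hz with ⟨v, hv, hvz⟩
        exact Or.inr ⟨v, ih hv, hvz⟩

lemma rsharp_symm {R : X → X → Prop} : ∀ {k : ℕ} {a b : X}, a ∈ rsharp R k b → b ∈ rsharp R k a := by
  intro k
  induction k with
  | zero => intro a b h; rcases h with rfl; rfl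
  | succ k ih =>
      intro a b h
      rcases h with (h | h) | h
      · exact rsharp_mono_succ R k a (ih h)
      · rcases h with ⟨v, hv, hva⟩
        have hbv : b ∈ rsharp R k v := ih hv
        have h1 : v ∈ rsharp R 1 a := by
          refine Or.inr ⟨a, rfl, hva⟩
        have := rsharp_add h1 k hbv
        simpa [Nat.add_comm] using this
      · rcases h with ⟨v, hv, hva⟩
        have hbv : b ∈ rsharp R k v := ih hv
        have h1 : v ∈ rsharp R 1 a := Or.inl (Or.inr ⟨a, rfl, hva⟩)
        have := rsharp_add h1 k hbv
        simpa [Nat.add_comm] using this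

lemma mem_tdelta {R : X → X → Prop} {V : ℕ → Set X} {φ : TForm} {k : ℕ} {w : X} :
    w ∈ TSat R V (tdelta k φ) ↔ ∃ u, u ∈ rsharp R k w ∧ u ∈ TSat R V φ := by
  induction k generalizing w with
  | zero =>
      constructor
      · intro h; exact ⟨w, self_mem_rsharp R 0 w, h⟩
      · rintro ⟨u, hu, h⟩
        have : u = w := hu
        exact this ▸ h
  | succ k ih =>
      simp only [tdelta, mem_TSat_orf, mem_TSat_dia, mem_TSat_bdia, ih]
      constructor
      · rintro (⟨u, hu, hφ⟩ | ⟨v, hwv, u, hu, hφ⟩ | ⟨v, hvw, u, hu, hφ⟩)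
        · exact ⟨u, Or.inl (Or.inl hu), hφ⟩
        · have hvu : v ∈ rsharp R k u := rsharp_symm hu
          have hwk : w ∈ rsharp R (k+1) u := Or.inr ⟨v, hvu, hwv⟩
          exact ⟨u, rsharp_symm hwk, hφ⟩
        · have hvu : v ∈ rsharp R k u := rsharp_symm hu
          have hwk : w ∈ rsharp R (k+1) u := Or.inl (Or.inr ⟨v, hvu, hvw⟩)
          exact ⟨u, rsharp_symm hwk, hφ⟩
      · rintro ⟨u, hu, hφ⟩
        have hw : w ∈ rsharp R (k+1) u := rsharp_symm hu
        rcases hw with (hw | ⟨v, hv, hvw⟩) | ⟨v, hv, hwv⟩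
        · exact Or.inl ⟨u, rsharp_symm hw, hφ⟩
        · exact Or.inr (Or.inr ⟨v, hvw, u, rsharp_symm hv, hφ⟩)
        · exact Or.inr (Or.inl ⟨v, hwv, u, rsharp_symm hv, hφ⟩)

lemma mem_tnabla {R : X → X → Prop} {V : ℕ → Set X} {φ : TForm} {k : ℕ} {w : X} :
    w ∈ TSat R V (tnabla k φ) ↔ ∀ u, u ∈ rsharp R k w → u ∈ TSat R V φ := by
  simp only [tnabla, mem_TSat_neg, mem_tdelta]
  push_neg
  constructor
  · intro h u hu
    by_contra hc
    exact hc (by simpa [mem_TSat_neg] using h u hu)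
  · intro h u hu
    simpa [mem_TSat_neg] using h u hu

end Aux
section Aux2

variable {X Y W Z : Type*}

open TForm Set

lemma Rimg_image {R : X → X → Prop} {S : Y → Y → Prop} {f : X → Y}
    (hf : IsTMorphism R S f) (B : Set X) :
    f '' Rimg R B = Rimg S (f '' B) := by
  ext z
  constructor
  · rintro ⟨w, ⟨v, hv, hvw⟩, rfl⟩
    exact ⟨f v, ⟨v, hv, rfl⟩, by
      have := (hf v).1
      have : f w ∈ f '' rsucc R v := ⟨w, hvw, rfl⟩
      rwa [(hf v).1] at this⟩
  · rintro ⟨fv, ⟨v, hv, rfl⟩, hz⟩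
    have : z ∈ f '' rsucc R v := by rw [(hf v).1]; exact hz
    rcases this with ⟨w, hw, rfl⟩
    exact ⟨w, ⟨v, hv, hw⟩, rfl⟩

lemma Rimg_flip_image {R : X → X → Prop} {S : Y → Y → Prop} {f : X → Y}
    (hf : IsTMorphism R S f) (B : Set X) :
    f '' Rimg (flip R) B = Rimg (flip S) (f '' B) := by
  ext z
  constructor
  · rintro ⟨w, ⟨v, hv, hvw⟩, rfl⟩
    refine ⟨f v, ⟨v, hv, rfl⟩, ?_⟩
    have : f w ∈ f '' rpred R v := ⟨w, hvw, rfl⟩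
    rwa [(hf v).2] at this
  · rintro ⟨fv, ⟨v, hv, rfl⟩, hz⟩
    have : z ∈ f '' rpred R v := by rw [(hf v).2]; exact hz
    rcases this with ⟨w, hw, rfl⟩
    exact ⟨w, ⟨v, hv, hw⟩, rfl⟩

/-- Ball image lemma: a t-morphism maps `k`-balls onto `k`-balls. -/
lemma rsharp_image {R : X → X → Prop} {S : Y → Y → Prop} {f : X → Y}
    (hf : IsTMorphism R S f) (k : ℕ) (x : X) :
    f '' rsharp R k x = rsharp S k (f x) := by
  induction k with
  | zero => simp [rsharp]
  | succ k ih =>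
      show f '' (rsharp R k x ∪ Rimg R (rsharp R k x) ∪ Rimg (flip R) (rsharp R k x)) = _
      rw [Set.image_union, Set.image_union, Rimg_image hf, Rimg_flip_image hf, ih]
      rfl

lemma rsharpOmega_image {R : X → X → Prop} {S : Y → Y → Prop} {f : X → Y}
    (hf : IsTMorphism R S f) (x : X) :
    f '' rsharpOmega R x = rsharpOmega S (f x) := by
  simp only [rsharpOmega, Set.image_iUnion]
  exact iUnion_congr fun k => rsharp_image hf k x

/-- Rootedness transfers along surjective t-morphisms. -/
lemma rooted_image {R : X → X → Prop} {S : Y → Y → Prop} {f : X → Y}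
    (hf : IsTMorphism R S f) (hsurj : Function.Surjective f) (h : Rooted R) : Rooted S := by
  rcases h with ⟨r, hr⟩
  refine ⟨f r, fun w => ?_⟩
  rcases hsurj w with ⟨v, rfl⟩
  rw [← rsharpOmega_image hf]
  exact ⟨v, hr v, rfl⟩

/-- rsharpOmega transitivity. -/
lemma rsharpOmega_trans {R : X → X → Prop} {a b c : X}
    (h1 : b ∈ rsharpOmega R a) (h2 : c ∈ rsharpOmega R b) : c ∈ rsharpOmega R a := by
  rcases Set.mem_iUnion.mp h1 with ⟨j, hj⟩
  rcases Set.mem_iUnion.mp h2 with ⟨k, hk⟩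
  exact Set.mem_iUnion.mpr ⟨j + k, rsharp_add hj k hk⟩

lemma rsharpOmega_symm {R : X → X → Prop} {a b : X}
    (h : b ∈ rsharpOmega R a) : a ∈ rsharpOmega R b := by
  rcases Set.mem_iUnion.mp h with ⟨j, hj⟩
  exact Set.mem_iUnion.mpr ⟨j, rsharp_symm hj⟩

/-- In a rooted frame every point sees every point. -/
lemma rooted_omega_univ {R : X → X → Prop} (h : Rooted R) (z : X) :
    rsharpOmega R z = Set.univ := by
  rcases h with ⟨r, hr⟩
  ext w
  simp only [Set.mem_univ, iff_true]
  exact rsharpOmega_trans (rsharpOmega_symm (hr z)) (hr w)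

/-- Stabilization of balls in a finite frame. -/
lemma rsharp_stab [Finite X] (R : X → X → Prop) (z : X) :
    ∃ K, rsharp R K z = rsharpOmega R z := by
  have hfin : ∀ k, (rsharp R k z).Finite := fun k => Set.toFinite _
  by_cases h : ∃ K, rsharp R K z = rsharp R (K+1) z
  · rcases h with ⟨K, hK⟩
    have hstep : ∀ j, rsharp R (K + j) z = rsharp R K z := by
      intro j
      induction j with
      | zero => rfl
      | succ j ih =>
          have : rsharp R (K + j + 1) z = rsharp R (K + 1) z := by
            show rsharp R (K+j) z ∪ Rimg R (rsharp R (K+j) z) ∪ Rimg (flip R) (rsharp R (K+j) z)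
              = rsharp R K z ∪ Rimg R (rsharp R K z) ∪ Rimg (flip R) (rsharp R K z)
            rw [ih]
          rw [show K + (j+1) = K + j + 1 from rfl, this, ← hK]
    refine ⟨K, ?_⟩
    apply Set.Subset.antisymm
    · exact Set.subset_iUnion (fun k => rsharp R k z) K
    · intro w hw
      rcases Set.mem_iUnion.mp hw with ⟨k, hk⟩
      rcases le_or_gt k K with hle | hlt
      · exact rsharp_mono R hle z hk
      · have : rsharp R k z = rsharp R K z := by
          have := hstep (k - K)
          rwa [Nat.add_sub_cancel' (le_of_lt hlt)] at this
        rwa [this] at hk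
  · exfalso
    push_neg at h
    have hmono : ∀ K, (rsharp R K z).ncard < (rsharp R (K+1) z).ncard := by
      intro K
      exact Set.ncard_lt_ncard
        (HasSubset.Subset.ssubset_of_ne (rsharp_mono_succ R K z) (h K)) (hfin _)
    have hge : ∀ K, K ≤ (rsharp R K z).ncard := by
      intro K
      induction K with
      | zero => exact Nat.zero_le _
      | succ K ih => exact Nat.lt_of_le_of_lt ih (hmono K)
    have hle : ∀ K, (rsharp R K z).ncard ≤ Nat.card X := by
      intro K
      have h1 : (rsharp R K z).ncard ≤ (Set.univ : Set X).ncard :=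
        Set.ncard_le_ncard (Set.subset_univ _) (Set.toFinite _)
      simpa [Set.ncard_univ] using h1
    have := hge (Nat.card X + 1)
    have := hle (Nat.card X + 1)
    omega

/-- Uniform coverage bound for finite rooted frames. -/
lemma finite_rooted_unif [Finite X] {R : X → X → Prop} (h : Rooted R) :
    ∃ K, ∀ z : X, rsharp R K z = Set.univ := by
  cases isEmpty_or_nonempty X with
  | inl he => exact ⟨0, fun z => (he.elim z)⟩
  | inr hne =>
      have : ∀ z : X, ∃ K, rsharp R K z = Set.univ := by
        intro z
        rcases rsharp_stab R z with ⟨K, hK⟩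
        exact ⟨K, by rw [hK, rooted_omega_univ h]⟩
      choose Kz hKz using this
      have := Fintype.ofFinite X
      refine ⟨Finset.univ.sup Kz, fun z => ?_⟩
      apply Set.eq_univ_of_univ_subset
      rw [← hKz z]
      exact rsharp_mono R (Finset.le_sup (Finset.mem_univ z)) z

/-! #### Validity transfer -/

lemma TSat_comm {R : X → X → Prop} {S : Y → Y → Prop} {f : X → Y}
    (hf : IsTMorphism R S f) (V' : ℕ → Set Y) (φ : TForm) :
    ∀ w : X, w ∈ TSat R (fun n => f ⁻¹' (V' n)) φ ↔ f w ∈ TSat S V' φ := by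
  induction φ with
  | var n => intro w; rfl
  | bot => intro w; simp [TSat]
  | imp φ ψ ihφ ihψ =>
      intro w
      simp only [mem_TSat_imp, ihφ w, ihψ w]
  | box φ ih =>
      intro w
      constructor
      · intro h u hu
        have : u ∈ f '' rsucc R w := by rw [(hf w).1]; exact hu
        rcases this with ⟨v, hv, rfl⟩
        exact (ih v).mp (h v hv)
      · intro h v hv
        refine (ih v).mpr (h (f v) ?_)
        show f v ∈ rsucc S (f w)
        rw [← (hf w).1]
        exact ⟨v, hv, rfl⟩
  | bdia φ ih =>
      intro w
      constructor
      · rintro ⟨v, hv, hφ⟩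
        refine ⟨f v, ?_, (ih v).mp hφ⟩
        show f v ∈ rpred S (f w)
        rw [← (hf w).2]
        exact ⟨v, hv, rfl⟩
      · rintro ⟨u, hu, hφ⟩
        have : u ∈ f '' rpred R w := by rw [(hf w).2]; exact hu
        rcases this with ⟨v, hv, rfl⟩
        exact ⟨v, hv, (ih v).mpr hφ⟩

lemma valid_image {R : X → X → Prop} {S : Y → Y → Prop} {f : X → Y}
    (hf : IsTMorphism R S f) (hsurj : Function.Surjective f) {φ : TForm}
    (h : Valid R φ) : Valid S φ := by
  intro V' s
  rcases hsurj s with ⟨w, rfl⟩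
  exact (TSat_comm hf V' φ w).mp (h _ w)

/-- A bijective strong homomorphism is a t-morphism. -/
lemma bij_strong_tmorphism {R : X → X → Prop} {S : Y → Y → Prop} {f : X → Y}
    (hbij : Function.Bijective f) (h : ∀ a b, R a b ↔ S (f a) (f b)) :
    IsTMorphism R S f := by
  intro w
  constructor
  · ext u
    constructor
    · rintro ⟨v, hv, rfl⟩; exact (h w v).mp hv
    · intro hu
      rcases hbij.2 u with ⟨v, rfl⟩
      exact ⟨v, (h w v).mpr hu, rfl⟩
  · ext u
    constructor
    · rintro ⟨v, hv, rfl⟩; exact (h v w).mp hv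
    · intro hu
      rcases hbij.2 u with ⟨v, rfl⟩
      exact ⟨v, (h v w).mpr hu, rfl⟩

/-- A t-morphism preserves the relation, and reflects it when injective. -/
lemma tmorphism_rel {R : X → X → Prop} {S : Y → Y → Prop} {f : X → Y}
    (hf : IsTMorphism R S f) {a b : X} (h : R a b) : S (f a) (f b) := by
  have : f b ∈ f '' rsucc R a := ⟨b, h, rfl⟩
  rwa [(hf a).1] at this

lemma tmorphism_rel_iff {R : X → X → Prop} {S : Y → Y → Prop} {f : X → Y}
    (hf : IsTMorphism R S f) (hinj : Function.Injective f) (a b : X) :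
    R a b ↔ S (f a) (f b) := by
  refine ⟨tmorphism_rel hf, fun h => ?_⟩
  have : f b ∈ f '' rsucc R a := by rw [(hf a).1]; exact h
  rcases this with ⟨v, hv, hfv⟩
  rwa [hinj hfv] at hv

end Aux2
section Aux3

open TForm Set

variable {X Y : Type} {N N' : Type}

lemma inCl_map {X : Type} {N N' : Type} (x : X) (h : N → N') (a : X ⊕ N) :
    inCl x (Sum.map id h a) ↔ inCl x a := by
  cases a <;> simp [inCl, Sum.map]

lemma preRel_map_iff {X : Type} {N N' : Type} (R : X → X → Prop) (x : X) (h : N → N')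
    (a b : X ⊕ N) :
    preRel N' R x (Sum.map id h a) (Sum.map id h b) ↔ preRel N R x a b := by
  unfold preRel
  simp only [inCl_map]
  constructor
  · rintro (⟨u, v, ha, hb, huv⟩ | ⟨hc, v, hb, hv⟩ | ⟨hc, u, ha, hu⟩ | h4)
    · cases a with
      | inl a' => cases b with
        | inl b' =>
            refine Or.inl ⟨a', b', rfl, rfl, ?_⟩
            simp [Sum.map] at ha hb
            rw [ha, hb]; exact huv
        | inr b' => simp [Sum.map] at hb
      | inr a' => simp [Sum.map] at ha
    · cases b with
      | inl b' =>
          refine Or.inr (Or.inl ⟨hc, b', rfl, ?_⟩)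
          simp [Sum.map] at hb
          rw [hb]; exact hv
      | inr b' => simp [Sum.map] at hb
    · cases a with
      | inl a' =>
          refine Or.inr (Or.inr (Or.inl ⟨hc, a', rfl, ?_⟩))
          simp [Sum.map] at ha
          rw [ha]; exact hu
      | inr a' => simp [Sum.map] at ha
    · exact Or.inr (Or.inr (Or.inr h4))
  · rintro (⟨u, v, rfl, rfl, huv⟩ | ⟨hc, v, rfl, hv⟩ | ⟨hc, u, rfl, hu⟩ | h4)
    · exact Or.inl ⟨u, v, rfl, rfl, huv⟩
    · exact Or.inr (Or.inl ⟨hc, v, rfl, hv⟩)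
    · exact Or.inr (Or.inr (Or.inl ⟨hc, u, rfl, hu⟩))
    · exact Or.inr (Or.inr (Or.inr h4))

lemma sum_map_surj {X : Type} {N N' : Type} {h : N → N'} (hs : Function.Surjective h) :
    Function.Surjective (Sum.map (id : X → X) h) := by
  rintro (u | j)
  · exact ⟨Sum.inl u, rfl⟩
  · rcases hs j with ⟨i, rfl⟩
    exact ⟨Sum.inr i, rfl⟩

/-- Collapsing fresh points gives a t-morphism between pre-skeletons. -/
lemma collapse_tmorphism {X : Type} {N N' : Type} (R : X → X → Prop) (x : X)
    {h : N → N'} (hs : Function.Surjective h) :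
    IsTMorphism (preRel N R x) (preRel N' R x) (Sum.map id h) := by
  intro a
  constructor
  · ext b'
    constructor
    · rintro ⟨b, hb, rfl⟩
      exact (preRel_map_iff R x h a b).mpr hb
    · intro hb'
      rcases sum_map_surj hs b' with ⟨b, rfl⟩
      exact ⟨b, (preRel_map_iff R x h a b).mp hb', rfl⟩
  · ext b'
    constructor
    · rintro ⟨b, hb, rfl⟩
      exact (preRel_map_iff R x h b a).mpr hb
    · intro hb'
      rcases sum_map_surj hs b' with ⟨b, rfl⟩
      exact ⟨b, (preRel_map_iff R x h b a).mp hb', rfl⟩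

/-- All inr points are mutually related in a pre-skeleton. -/
lemma preRel_inr_inr {X N : Type} (R : X → X → Prop) (x : X) (i j : N) :
    preRel N R x (Sum.inr i) (Sum.inr j) :=
  Or.inr (Or.inr (Or.inr ⟨trivial, trivial⟩))

/-- Uniform coverage for `𝔉^x_ω` built over a finite skeleton. -/
lemma omega_unif_cover {Y : Type} [Finite Y] (S : Y → Y → Prop) (y : Y)
    (hroot : Rooted (preRel ℕ S y)) :
    ∃ K, ∀ z : Y ⊕ ℕ, rsharp (preRel ℕ S y) K z = Set.univ := by
  set T := preRel ℕ S y
  set π : Y ⊕ ℕ → Y ⊕ Fin 1 := Sum.map id (fun _ => (0 : Fin 1)) with hπ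
  have hπs : Function.Surjective π :=
    sum_map_surj (fun j => ⟨0, Subsingleton.elim _ _⟩)
  have hπt : IsTMorphism T (preRel (Fin 1) S y) π :=
    collapse_tmorphism S y (fun j => ⟨0, Subsingleton.elim _ _⟩)
  have hroot' : Rooted (preRel (Fin 1) S y) := rooted_image hπt hπs hroot
  rcases finite_rooted_unif hroot' with ⟨K, hK⟩
  refine ⟨K + 1, fun z => ?_⟩
  apply Set.eq_univ_of_forall
  intro w
  have : π w ∈ rsharp (preRel (Fin 1) S y) K (π z) := by rw [hK]; trivial
  rw [← rsharp_image hπt] at this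
  rcases this with ⟨a, ha, hpa⟩
  by_cases hab : a = w
  · exact rsharp_mono_succ T K z (hab ▸ ha)
  · -- a ≠ w but π a = π w: both are inr
    have : ∃ i j : ℕ, a = Sum.inr i ∧ w = Sum.inr j := by
      cases a with
      | inl u => cases w with
        | inl v =>
            exfalso; apply hab
            simp [hπ, Sum.map] at hpa
            rw [hpa]
        | inr j => exfalso; simp [hπ, Sum.map] at hpa
      | inr i => cases w with
        | inl v => exfalso; simp [hπ, Sum.map] at hpa
        | inr j => exact ⟨i, j, rfl, rfl⟩
    rcases this with ⟨i, j, rfl, rfl⟩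
    exact Or.inl (Or.inr ⟨Sum.inr i, ha, preRel_inr_inr S y i j⟩)

end Aux3
section Aux4

open TForm Set Classical

lemma mem_finPairs {n : ℕ} (p : Fin n × Fin n) : p ∈ finPairs n := by
  rcases p with ⟨i, j⟩
  unfold finPairs
  rw [List.mem_flatMap]
  exact ⟨i, List.mem_finRange i, List.mem_map.mpr ⟨j, List.mem_finRange j, rfl⟩⟩

/-- The canonical valuation on the target frame: `V m = {e i : i.val = m}`. -/
def jkVal {Z : Type*} {N : ℕ} (e : Fin N → Z) : ℕ → Set Z :=
  fun m => {w | ∃ i : Fin N, (i : ℕ) = m ∧ e i = w}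

lemma jkVal_self {Z : Type*} {N : ℕ} (e : Fin N → Z) (i : Fin N) : e i ∈ jkVal e i.val :=
  ⟨i, rfl, rfl⟩

lemma jkVal_eq {Z : Type*} {N : ℕ} {e : Fin N → Z} (_hinj : Function.Injective e)
    {w : Z} {i : Fin N} (h : w ∈ jkVal e i.val) : w = e i := by
  rcases h with ⟨j, hj, rfl⟩
  have : j = i := Fin.ext hj
  rw [this]

/-- The Jankov formula is satisfied at `e i₀` in its own frame, under the canonical
valuation. -/
lemma jankov_sat {Z : Type*} (T : Z → Z → Prop) (k N : ℕ) (hN : 0 < N)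
    (e : Fin N → Z) (he : Function.Bijective e) :
    e ⟨0, hN⟩ ∈ TSat T (jkVal e) (jankov T k N e) := by
  unfold jankov
  rw [mem_TSat_andf, mem_TSat_andf, mem_TSat_andf, mem_TSat_andf]
  refine ⟨⟨?_, ?_⟩, ?_, ?_, ?_⟩
  · -- var 0
    exact ⟨⟨0, hN⟩, rfl, rfl⟩
  · -- coverage
    rw [mem_tnabla]
    intro u _
    rw [mem_bigDisj]
    rcases he.2 u with ⟨i, rfl⟩
    exact ⟨TForm.var i.val, List.mem_map.mpr ⟨i, List.mem_finRange i, rfl⟩, jkVal_self e i⟩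
  · -- disjointness
    rw [mem_bigConj]
    intro φ hφ
    rcases List.mem_map.mp hφ with ⟨p, hp, rfl⟩
    rcases List.mem_filter.mp hp with ⟨-, hne⟩
    have hne' : p.1 ≠ p.2 := by simpa using hne
    rw [mem_tnabla]
    intro u _
    rw [mem_TSat_imp, mem_TSat_neg]
    intro h1 h2
    exact hne' (he.1 ((jkVal_eq he.1 h1).symm.trans (jkVal_eq he.1 h2)))
  · -- related pairs
    rw [mem_bigConj]
    intro φ hφ
    rcases List.mem_map.mp hφ with ⟨p, hp, rfl⟩
    rcases List.mem_filter.mp hp with ⟨-, hrel⟩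
    have hrel' : T (e p.1) (e p.2) := by simpa using hrel
    rw [mem_tnabla]
    intro u _
    rw [mem_TSat_andf, mem_TSat_imp, mem_TSat_imp, mem_TSat_dia, mem_TSat_bdia]
    constructor
    · intro h1
      rw [jkVal_eq he.1 h1]
      exact ⟨e p.2, hrel', jkVal_self e p.2⟩
    · intro h2
      rw [jkVal_eq he.1 h2]
      exact ⟨e p.1, hrel', jkVal_self e p.1⟩
  · -- unrelated pairs
    rw [mem_bigConj]
    intro φ hφ
    rcases List.mem_map.mp hφ with ⟨p, hp, rfl⟩
    rcases List.mem_filter.mp hp with ⟨-, hrel⟩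
    have hrel' : ¬ T (e p.1) (e p.2) := by simpa using hrel
    rw [mem_tnabla]
    intro u _
    rw [mem_TSat_andf, mem_TSat_imp, mem_TSat_imp, mem_TSat_neg, mem_TSat_neg,
      mem_TSat_dia, mem_TSat_bdia]
    constructor
    · rintro h1 ⟨u', hu', h2⟩
      rw [jkVal_eq he.1 h1] at hu'
      rw [jkVal_eq he.1 h2] at hu'
      exact hrel' hu'
    · rintro h2 ⟨u', hu', h1⟩
      rw [jkVal_eq he.1 h2] at hu'
      rw [jkVal_eq he.1 h1] at hu'
      exact hrel' hu'

/-- The Jankov lemma: satisfaction of the Jankov formula at a point of a frame covered by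
the `(k-1)`-ball around that point yields a t-morphism to the target frame. -/
lemma jankov_extract {W Z : Type*} {T : W → W → Prop} {T' : Z → Z → Prop}
    {k N : ℕ} {e : Fin N → Z} (he : Function.Surjective e)
    {V : ℕ → Set W} {z : W}
    (hz : z ∈ TSat T V (jankov T' k N e))
    (hcov : ∀ w : W, w ∈ rsharp T (k-1) z) :
    ∃ f : W → Z, IsTMorphism T T' f ∧ ∀ w, ∃ i : Fin N, f w = e i ∧ w ∈ V i.val := by
  have hcovk : ∀ w : W, w ∈ rsharp T k z := fun w =>
    rsharp_mono T (Nat.sub_le k 1) z (hcov w)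
  unfold jankov at hz
  rw [mem_TSat_andf, mem_TSat_andf, mem_TSat_andf, mem_TSat_andf] at hz
  obtain ⟨⟨-, hB⟩, hC, hD, hE⟩ := hz
  rw [mem_tnabla] at hB
  -- coverage
  have hcover : ∀ w : W, ∃ i : Fin N, w ∈ V i.val := by
    intro w
    have := hB w (hcovk w)
    rw [mem_bigDisj] at this
    rcases this with ⟨φ, hφ, hw⟩
    rcases List.mem_map.mp hφ with ⟨i, -, rfl⟩
    exact ⟨i, hw⟩
  -- disjointness
  have hdisj : ∀ (w : W) (i j : Fin N), w ∈ V i.val → w ∈ V j.val → i = j := by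
    intro w i j hi hj
    by_contra hne
    rw [mem_bigConj] at hC
    have hmem : tnabla k (TForm.imp (.var i.val) (neg (.var j.val))) ∈
        ((finPairs N).filter fun p => decide (p.1 ≠ p.2)).map fun p =>
          tnabla k (TForm.imp (.var p.1.val) (neg (.var p.2.val))) := by
      refine List.mem_map.mpr ⟨(i, j), List.mem_filter.mpr ⟨mem_finPairs _, by simpa using hne⟩, rfl⟩
    have := hC _ hmem
    rw [mem_tnabla] at this
    have := this w (hcovk w)
    rw [mem_TSat_imp, mem_TSat_neg] at this
    exact this hi hj
  -- related-pair clauses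
  have hDc : ∀ (i j : Fin N), T' (e i) (e j) → ∀ w : W,
      (w ∈ V i.val → ∃ w', T w w' ∧ w' ∈ V j.val) ∧
      (w ∈ V j.val → ∃ w', T w' w ∧ w' ∈ V i.val) := by
    intro i j hij w
    rw [mem_bigConj] at hD
    have hmem : tnabla (k-1) (andf (TForm.imp (.var i.val) (dia (.var j.val)))
        (TForm.imp (.var j.val) (.bdia (.var i.val)))) ∈
        ((finPairs N).filter fun p => decide (T' (e p.1) (e p.2))).map fun p =>
          tnabla (k-1) (andf (TForm.imp (.var p.1.val) (dia (.var p.2.val)))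
            (TForm.imp (.var p.2.val) (.bdia (.var p.1.val)))) :=
      List.mem_map.mpr ⟨(i, j), List.mem_filter.mpr ⟨mem_finPairs _, decide_eq_true hij⟩, rfl⟩
    have := hD _ hmem
    rw [mem_tnabla] at this
    have := this w (hcov w)
    rw [mem_TSat_andf, mem_TSat_imp, mem_TSat_imp, mem_TSat_dia, mem_TSat_bdia] at this
    exact this
  -- unrelated-pair clauses
  have hEc : ∀ (i j : Fin N), ¬ T' (e i) (e j) → ∀ w : W,
      (w ∈ V i.val → ¬ ∃ w', T w w' ∧ w' ∈ V j.val) ∧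
      (w ∈ V j.val → ¬ ∃ w', T w' w ∧ w' ∈ V i.val) := by
    intro i j hij w
    rw [mem_bigConj] at hE
    have hmem : tnabla (k-1) (andf (TForm.imp (.var i.val) (neg (dia (.var j.val))))
        (TForm.imp (.var j.val) (neg (.bdia (.var i.val))))) ∈
        ((finPairs N).filter fun p => decide (¬ T' (e p.1) (e p.2))).map fun p =>
          tnabla (k-1) (andf (TForm.imp (.var p.1.val) (neg (dia (.var p.2.val))))
            (TForm.imp (.var p.2.val) (neg (.bdia (.var p.1.val))))) :=
      List.mem_map.mpr ⟨(i, j), List.mem_filter.mpr ⟨mem_finPairs _, decide_eq_true hij⟩, rfl⟩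
    have := hE _ hmem
    rw [mem_tnabla] at this
    have := this w (hcov w)
    rw [mem_TSat_andf, mem_TSat_imp, mem_TSat_imp, mem_TSat_neg, mem_TSat_neg,
      mem_TSat_dia, mem_TSat_bdia] at this
    exact this
  -- the map
  choose idx hidx using hcover
  refine ⟨fun w => e (idx w), ?_, fun w => ⟨idx w, rfl, hidx w⟩⟩
  intro w
  constructor
  · ext c
    constructor
    · rintro ⟨v, hv, rfl⟩
      show T' (e (idx w)) (e (idx v))
      by_contra hc
      exact (hEc _ _ hc w).1 (hidx w) ⟨v, hv, hidx v⟩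
    · intro hc
      rcases he c with ⟨j, rfl⟩
      rcases (hDc (idx w) j hc w).1 (hidx w) with ⟨w', hw', hj⟩
      refine ⟨w', hw', ?_⟩
      show e (idx w') = e j
      rw [hdisj w' (idx w') j (hidx w') hj]
  · ext c
    constructor
    · rintro ⟨v, hv, rfl⟩
      show T' (e (idx v)) (e (idx w))
      by_contra hc
      exact (hEc _ _ hc w).2 (hidx w) ⟨v, hv, hidx v⟩
    · intro hc
      rcases he c with ⟨j, rfl⟩
      rcases (hDc j (idx w) hc w).2 (hidx w) with ⟨w', hw', hj⟩
      refine ⟨w', hw', ?_⟩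
      show e (idx w') = e j
      rw [hdisj w' (idx w') j (hidx w') hj]

end Aux4
section Aux5

open TForm Set

lemma preRel_inl_inl {X N : Type} {R : X → X → Prop} (hrefl : Reflexive R) (x u v : X) :
    preRel N R x (Sum.inl u) (Sum.inl v) ↔ R u v := by
  constructor
  · rintro (⟨u', v', hu, hv, h⟩ | ⟨hc, v', hv, h⟩ | ⟨hc, u', hu, h⟩ | ⟨hc1, hc2⟩)
    · cases hu; cases hv; exact h
    · have hux : u = x := hc
      cases hv; rw [hux]; exact h
    · have hvx : v = x := hc
      cases hu; rw [hvx]; exact h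
    · have hux : u = x := hc1
      have hvx : v = x := hc2
      rw [hux, hvx]; exact hrefl x
  · intro h
    exact Or.inl ⟨u, v, rfl, rfl, h⟩

lemma preRel_inl_cl {X N : Type} {R : X → X → Prop} (hrefl : Reflexive R) (x u : X)
    {b : X ⊕ N} (hb : inCl x b) : preRel N R x (Sum.inl u) b ↔ R u x := by
  cases b with
  | inl v =>
      have hv : v = x := hb
      rw [hv, preRel_inl_inl hrefl]
  | inr i =>
      constructor
      · rintro (⟨u', v', hu, hv, h⟩ | ⟨hc, v', hv, h⟩ | ⟨hc, u', hu, h⟩ | ⟨hc1, hc2⟩)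
        · cases hv
        · cases hv
        · cases hu; exact h
        · have : u = x := hc1
          rw [this]; exact hrefl x
      · intro h
        exact Or.inr (Or.inr (Or.inl ⟨trivial, u, rfl, h⟩))

lemma preRel_cl_inl {X N : Type} {R : X → X → Prop} (hrefl : Reflexive R) (x v : X)
    {a : X ⊕ N} (ha : inCl x a) : preRel N R x a (Sum.inl v) ↔ R x v := by
  cases a with
  | inl u =>
      have hu : u = x := ha
      rw [hu, preRel_inl_inl hrefl]
  | inr i =>
      constructor
      · rintro (⟨u', v', hu, hv, h⟩ | ⟨hc, v', hv, h⟩ | ⟨hc, u', hu, h⟩ | ⟨hc1, hc2⟩)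
        · cases hu
        · cases hv; exact h
        · cases hu
        · have : v = x := hc2
          rw [this]; exact hrefl x
      · intro h
        exact Or.inr (Or.inl ⟨trivial, v, rfl, h⟩)

/-- In a pre-skeleton over a skeleton, points outside the blown-up cluster have
singleton clusters. -/
lemma cluster_singleton {X N : Type} {R : X → X → Prop} (hskel : IsSkeleton R) {x u : X}
    (hu : u ≠ x) {a : X ⊕ N} (h1 : preRel N R x (Sum.inl u) a)
    (h2 : preRel N R x a (Sum.inl u)) : a = Sum.inl u := by
  obtain ⟨hrefl, htrans, hanti⟩ := hskel
  cases a with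
  | inl v =>
      rw [preRel_inl_inl hrefl] at h1 h2
      rw [hanti v u h2 h1]
  | inr i =>
      exfalso
      have hux : R u x := (preRel_inl_cl hrefl x u (by trivial)).mp h1
      have hxu : R x u := (preRel_cl_inl hrefl x u (by trivial)).mp h2
      exact hu (hanti u x hux hxu)

/-- Along a relation-isomorphism of pre-skeletons, blown-up cluster points map to
blown-up cluster points. -/
lemma tm_cluster {Y X N1 N2 : Type} {S : Y → Y → Prop} {R : X → X → Prop} {y : Y} {x : X}
    (hRskel : IsSkeleton R) {g : Y ⊕ N1 → X ⊕ N2} (hinj : Function.Injective g)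
    (hiff : ∀ a b, preRel N1 S y a b ↔ preRel N2 R x (g a) (g b))
    (n0 : N1) {c : Y ⊕ N1} (hc : inCl y c) : inCl x (g c) := by
  have hpair : ∃ c' : Y ⊕ N1, c ≠ c' ∧ inCl y c' := by
    cases c with
    | inl v => exact ⟨Sum.inr n0, by simp, trivial⟩
    | inr i => exact ⟨Sum.inl y, by simp, rfl⟩
  rcases hpair with ⟨c', hne, hc'⟩
  have h1 : preRel N2 R x (g c) (g c') := (hiff c c').mp (Or.inr (Or.inr (Or.inr ⟨hc, hc'⟩)))
  have h2 : preRel N2 R x (g c') (g c) := (hiff c' c).mp (Or.inr (Or.inr (Or.inr ⟨hc', hc⟩)))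
  by_contra hncl
  have : ∃ u : X, u ≠ x ∧ g c = Sum.inl u := by
    cases hgc : g c with
    | inl u =>
        refine ⟨u, ?_, rfl⟩
        intro hux
        exact hncl (by rw [hgc]; exact hux)
    | inr i => exact absurd (show inCl x (g c) by rw [hgc]; trivial) hncl
  rcases this with ⟨u, hux, hgc⟩
  rw [hgc] at h1 h2
  have := cluster_singleton hRskel hux h1 h2
  exact hne (hinj (this.trans hgc.symm)).symm

/-- A skeleton isomorphism sending `x` to `y` induces a relation isomorphism of
pre-skeletons. -/
lemma preRel_iso {X Y N : Type} {R : X → X → Prop} {S : Y → Y → Prop} {x : X} {y : Y}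
    {ψ : X → Y} (hinj : Function.Injective ψ) (hx : ψ x = y)
    (hrel : ∀ u v, R u v ↔ S (ψ u) (ψ v)) (a b : X ⊕ N) :
    preRel N R x a b ↔ preRel N S y (Sum.map ψ id a) (Sum.map ψ id b) := by
  have hinCl : ∀ a : X ⊕ N, inCl x a ↔ inCl y (Sum.map ψ id a) := by
    rintro (u | i)
    · show u = x ↔ ψ u = y
      constructor
      · rintro rfl; exact hx
      · intro h; exact hinj (h.trans hx.symm)
    · simp [inCl]
  have hRx : ∀ v, R x v ↔ S y (ψ v) := fun v => (hrel x v).trans (by rw [hx])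
  have hxR : ∀ u, R u x ↔ S (ψ u) y := fun u => (hrel u x).trans (by rw [hx])
  constructor
  · rintro (⟨u, v, rfl, rfl, huv⟩ | ⟨hc, v, rfl, hv⟩ | ⟨hc, u, rfl, hu⟩ | ⟨h1, h2⟩)
    · exact Or.inl ⟨ψ u, ψ v, rfl, rfl, (hrel u v).mp huv⟩
    · exact Or.inr (Or.inl ⟨(hinCl a).mp hc, ψ v, rfl, (hRx v).mp hv⟩)
    · exact Or.inr (Or.inr (Or.inl ⟨(hinCl b).mp hc, ψ u, rfl, (hxR u).mp hu⟩))
    · exact Or.inr (Or.inr (Or.inr ⟨(hinCl a).mp h1, (hinCl b).mp h2⟩))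
  · rintro (⟨u', v', hu, hv, huv⟩ | ⟨hc, v', hv, hv'⟩ | ⟨hc, u', hu, hu'⟩ | ⟨h1, h2⟩)
    · cases a with
      | inl u =>
          cases b with
          | inl v =>
              refine Or.inl ⟨u, v, rfl, rfl, ?_⟩
              simp [Sum.map] at hu hv
              rw [(hrel u v)]
              rw [hu, hv]; exact huv
          | inr j => simp [Sum.map] at hv
      | inr i => simp [Sum.map] at hu
    · cases b with
      | inl v =>
          refine Or.inr (Or.inl ⟨(hinCl a).mpr hc, v, rfl, ?_⟩)
          simp [Sum.map] at hv
          rw [hRx v, hv]; exact hv'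
      | inr j => simp [Sum.map] at hv
    · cases a with
      | inl u =>
          refine Or.inr (Or.inr (Or.inl ⟨(hinCl b).mpr hc, u, rfl, ?_⟩))
          simp [Sum.map] at hu
          rw [hxR u, hu]; exact hu'
      | inr i => simp [Sum.map] at hu
    · exact Or.inr (Or.inr (Or.inr ⟨(hinCl a).mpr h1, (hinCl b).mpr h2⟩))

end Aux5
/-- two c-irreducible rooted pre-skeletons over finite skeletons with the
same logic have isomorphic 1-blowups `𝔉^x_1 ≅ 𝔊^y_1`. -/
theorem statement11 {X Y : Type} [Nonempty X] [Finite X] [Nonempty Y] [Finite Y]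
    (R : X → X → Prop) (S : Y → Y → Prop)
    (hRskel : IsSkeleton R) (hSskel : IsSkeleton S) (x : X) (y : Y)
    (hRroot : Rooted (preRel ℕ R x)) (hSroot : Rooted (preRel ℕ S y))
    (hRirr : CIrrOmega R x) (hSirr : CIrrOmega S y)
    (heq : FrameLog (preRel ℕ R x) = FrameLog (preRel ℕ S y)) :
    ∃ g : X ⊕ Fin 1 → Y ⊕ Fin 1, Function.Bijective g ∧
      IsTMorphism (preRel (Fin 1) R x) (preRel (Fin 1) S y) g := by
  classical
  -- set up the finite blow-up `𝔉^x_n` with `n > |Y|`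
  set n : ℕ := Nat.card Y + 1 with hn_def
  have hn : 0 < n := Nat.succ_pos _
  have := Fintype.ofFinite X
  have := Fintype.ofFinite Y
  have := Fintype.ofFinite (X ⊕ Fin n)
  set N : ℕ := Fintype.card (X ⊕ Fin n) with hN_def
  have hN : 0 < N := Fintype.card_pos
  set e : Fin N → X ⊕ Fin n := ⇑(Fintype.equivFin (X ⊕ Fin n)).symm with he_def
  have hebij : Function.Bijective e := (Fintype.equivFin (X ⊕ Fin n)).symm.bijective
  -- the collapse `𝔉^x_ω ↠ 𝔉^x_n`
  set cm : ℕ → Fin n := fun i => ⟨i % n, Nat.mod_lt i hn⟩ with hcm_def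
  have hcms : Function.Surjective cm := by
    rintro ⟨j, hj⟩
    exact ⟨j, by simp [hcm_def, Nat.mod_eq_of_lt hj]⟩
  have hcoll : IsTMorphism (preRel ℕ R x) (preRel (Fin n) R x) (Sum.map id cm) :=
    collapse_tmorphism R x hcms
  have hcolls : Function.Surjective (Sum.map (id : X → X) cm) := sum_map_surj hcms
  -- uniform coverage bound for `𝔊^y_ω`
  obtain ⟨K, hK⟩ := omega_unif_cover S y hSroot
  set k : ℕ := K + 1 with hk_def
  -- the Jankov formula of `𝔉^x_n`
  set J : TForm := jankov (preRel (Fin n) R x) k N e with hJ_def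
  -- `¬J` fails in `𝔉^x_n`, hence is not in the logic of `𝔉^x_ω = 𝔊^y_ω`
  have hsatJ : e ⟨0, hN⟩ ∈ TSat (preRel (Fin n) R x) (jkVal e) J :=
    jankov_sat (preRel (Fin n) R x) k N hN e hebij
  have hnotvalid : ¬ Valid (preRel (Fin n) R x) (neg J) := by
    intro h
    exact mem_TSat_neg.mp (h (jkVal e) (e ⟨0, hN⟩)) hsatJ
  have hnegJ_notin : neg J ∉ FrameLog (preRel ℕ R x) := by
    intro h
    exact hnotvalid (valid_image hcoll hcolls h)
  rw [heq] at hnegJ_notin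
  have hnval : ¬ Valid (preRel ℕ S y) (neg J) := hnegJ_notin
  rw [Valid] at hnval
  push_neg at hnval
  obtain ⟨V, z, hz⟩ := hnval
  have hzJ : z ∈ TSat (preRel ℕ S y) V J := by
    by_contra hc
    exact hz (mem_TSat_neg.mpr hc)
  -- extract a t-morphism `f : 𝔊^y_ω → 𝔉^x_n`
  have hcov : ∀ w : Y ⊕ ℕ, w ∈ rsharp (preRel ℕ S y) (k - 1) z := by
    intro w
    have : k - 1 = K := by omega
    rw [this, hK z]
    trivial
  obtain ⟨f, hf, hfi⟩ := jankov_extract hebij.2 hzJ hcov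
  -- rootedness of `𝔉^x_n` and surjectivity of `f`
  have hroot_fin : Rooted (preRel (Fin n) R x) := rooted_image hcoll hcolls hRroot
  have hfsurj : Function.Surjective f := by
    intro c
    have hc : c ∈ rsharpOmega (preRel (Fin n) R x) (f z) := by
      rw [rooted_omega_univ hroot_fin]
      trivial
    rcases Set.mem_iUnion.mp hc with ⟨k', hk'⟩
    rw [← rsharp_image hf] at hk'
    rcases hk' with ⟨w, -, hw⟩
    exact ⟨w, hw⟩
  -- apply c-irreducibility of `𝔊^y_ω`
  rcases hSirr (X ⊕ Fin n) (preRel (Fin n) R x) ⟨f, hfsurj, hf⟩ with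
    ⟨m, hm, g, hgbij, hgtm⟩ | ⟨g, hgbij, -⟩ | ⟨h, hhsurj, -⟩
  · -- main case: `𝔊^y_m ≅ 𝔉^x_n`
    have hiff : ∀ a b, preRel (Fin m) S y a b ↔ preRel (Fin n) R x (g a) (g b) :=
      tmorphism_rel_iff hgtm hgbij.1
    set eqv : (Y ⊕ Fin m) ≃ (X ⊕ Fin n) := Equiv.ofBijective g hgbij with heqv_def
    have hgeqv : ∀ a, eqv a = g a := fun a => rfl
    have hiff_inv : ∀ a b, preRel (Fin n) R x a b ↔
        preRel (Fin m) S y (eqv.symm a) (eqv.symm b) := by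
      intro a b
      have h2 := hiff (eqv.symm a) (eqv.symm b)
      rw [show g (eqv.symm a) = a from eqv.apply_symm_apply a,
        show g (eqv.symm b) = b from eqv.apply_symm_apply b] at h2
      exact h2.symm
    have hclg : ∀ c, inCl y c → inCl x (g c) :=
      fun c hc => tm_cluster hRskel hgbij.1 hiff ⟨0, hm⟩ hc
    have hclginv : ∀ d, inCl x d → inCl y (eqv.symm d) :=
      fun d hd => tm_cluster hSskel eqv.symm.injective hiff_inv ⟨0, hn⟩ hd
    -- extract the skeleton isomorphism `χ : Y → X`
    have key : ∀ v : Y, ∃ u : X, (v ≠ y → u ≠ x ∧ g (Sum.inl v) = Sum.inl u) ∧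
        (v = y → u = x) := by
      intro v
      by_cases hv : v = y
      · exact ⟨x, fun h => absurd hv h, fun _ => rfl⟩
      · have hncl : ¬ inCl x (g (Sum.inl v)) := by
          intro hcl
          have h2 := hclginv _ hcl
          rw [show eqv.symm (g (Sum.inl v)) = Sum.inl v from eqv.symm_apply_apply _] at h2
          exact hv h2
        cases hgv : g (Sum.inl v) with
        | inl u =>
            refine ⟨u, fun _ => ⟨?_, rfl⟩, fun hcontra => absurd hcontra hv⟩
            intro hux
            exact hncl (by rw [hgv]; exact hux)
        | inr i => exact absurd (show inCl x (g (Sum.inl v)) by rw [hgv]; trivial) hncl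
    choose χ hχ using key
    have hχy : χ y = x := (hχ y).2 rfl
    have hχne : ∀ v, v ≠ y → χ v ≠ x ∧ g (Sum.inl v) = Sum.inl (χ v) := fun v h => (hχ v).1 h
    have hχinj : Function.Injective χ := by
      intro v₁ v₂ h
      by_cases h1 : v₁ = y <;> by_cases h2 : v₂ = y
      · rw [h1, h2]
      · exfalso
        rw [h1, hχy] at h
        exact (hχne v₂ h2).1 h.symm
      · exfalso
        rw [h2, hχy] at h
        exact (hχne v₁ h1).1 h
      · have : g (Sum.inl v₁) = g (Sum.inl v₂) := by
          rw [(hχne v₁ h1).2, (hχne v₂ h2).2, h]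
        cases hgbij.1 this
        rfl
    have hχsurj : Function.Surjective χ := by
      intro u
      by_cases hu : u = x
      · exact ⟨y, by rw [hχy, hu]⟩
      · have hncl : ¬ inCl y (eqv.symm (Sum.inl u)) := by
          intro hcl
          have h2 := hclg _ hcl
          rw [show g (eqv.symm (Sum.inl u)) = Sum.inl u from eqv.apply_symm_apply _] at h2
          exact hu h2
        cases hd : eqv.symm (Sum.inl u) with
        | inl v =>
            have hvy : v ≠ y := by
              intro hvy
              exact hncl (by rw [hd, hvy]; rfl)
            refine ⟨v, ?_⟩
            have : g (Sum.inl v) = Sum.inl u := by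
              rw [← hd]
              exact eqv.apply_symm_apply _
            rw [(hχne v hvy).2] at this
            exact Sum.inl.inj this
        | inr i => exact absurd (show inCl y (eqv.symm (Sum.inl u)) by rw [hd]; trivial) hncl
    -- `χ` is a relation isomorphism of skeletons
    have hrelχ : ∀ v w : Y, S v w ↔ R (χ v) (χ w) := by
      intro v w
      by_cases hv : v = y <;> by_cases hw : w = y
      · rw [hv, hw, hχy]
        exact iff_of_true (hSskel.1 y) (hRskel.1 x)
      · -- v = y, w ≠ y
        rw [hv, hχy]
        have h1 : S y w ↔ preRel (Fin m) S y (Sum.inl y) (Sum.inl w) :=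
          (preRel_inl_inl hSskel.1 y y w).symm
        rw [h1, hiff, (hχne w hw).2]
        exact preRel_cl_inl hRskel.1 x (χ w) (hclg (Sum.inl y) rfl)
      · -- v ≠ y, w = y
        rw [hw, hχy]
        have h1 : S v y ↔ preRel (Fin m) S y (Sum.inl v) (Sum.inl y) :=
          (preRel_inl_inl hSskel.1 y v y).symm
        rw [h1, hiff, (hχne v hv).2]
        exact preRel_inl_cl hRskel.1 x (χ v) (hclg (Sum.inl y) rfl)
      · have h1 : S v w ↔ preRel (Fin m) S y (Sum.inl v) (Sum.inl w) :=
          (preRel_inl_inl hSskel.1 y v w).symm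
        rw [h1, hiff, (hχne v hv).2, (hχne w hw).2]
        exact preRel_inl_inl hRskel.1 x (χ v) (χ w)
    -- invert to get `ψ : X → Y`
    set χe : Y ≃ X := Equiv.ofBijective χ ⟨hχinj, hχsurj⟩ with hχe_def
    set ψ : X → Y := ⇑χe.symm with hψ_def
    have hχψ : ∀ u, χ (ψ u) = u := fun u => χe.apply_symm_apply u
    have hψx : ψ x = y := by
      apply hχinj
      rw [hχψ x, hχy]
    have hrelψ : ∀ u u' : X, R u u' ↔ S (ψ u) (ψ u') := by
      intro u u'
      have := hrelχ (ψ u) (ψ u')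
      rw [hχψ u, hχψ u'] at this
      exact this.symm
    -- assemble the final isomorphism
    have hGbij : Function.Bijective (Sum.map ψ (id : Fin 1 → Fin 1)) := by
      have hb := (Equiv.sumCongr χe.symm (Equiv.refl (Fin 1))).bijective
      have hfeq : ⇑(Equiv.sumCongr χe.symm (Equiv.refl (Fin 1))) = Sum.map ψ id := by
        funext a
        cases a <;> rfl
      rwa [hfeq] at hb
    exact ⟨Sum.map ψ id, hGbij,
      bij_strong_tmorphism hGbij (preRel_iso χe.symm.injective hψx hrelψ)⟩
  · -- impossible: a bijection from an infinite type to a finite one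
    exfalso
    have : Finite (Y ⊕ ℕ) := Finite.of_injective g hgbij.1
    exact not_finite (Y ⊕ ℕ)
  · -- impossible: a surjection from `Y` onto a strictly larger finite type
    exfalso
    have hcard : Nat.card (X ⊕ Fin n) ≤ Nat.card Y := Nat.card_le_card_of_surjective h hhsurj
    have h1 : Nat.card (X ⊕ Fin n) = Nat.card X + n := by
      rw [Nat.card_sum, Nat.card_eq_fintype_card (α := Fin n), Fintype.card_fin]
    have h2 : 0 < Nat.card X := Nat.card_pos
    omega
end

section
/- For every function f : ω → {0,1}, the generalized Thue–Morse sequence χ^f : ℤ → {0,1} is finitely perfect. -/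
open TForm

namespace TMP

def A (k : ℕ) : ℤ := (tmBnd k).1
def B (k : ℕ) : ℤ := (tmBnd k).2

lemma tmBnd_succ (k : ℕ) : tmBnd (k+1) =
    if k % 2 = 0 then ((tmBnd k).1, (tmBnd k).2 + ((tmBnd k).2 - (tmBnd k).1 + 1) + 1)
    else ((tmBnd k).1 - ((tmBnd k).2 - (tmBnd k).1 + 1) - 1, (tmBnd k).2) := rfl

lemma tmBnd_succ_even (k : ℕ) (hk : k % 2 = 0) :
    A (k+1) = A k ∧ B (k+1) = B k + (B k - A k + 1) + 1 := by
  simp only [A, B, tmBnd_succ, if_pos hk]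
  exact ⟨trivial, trivial⟩

lemma tmBnd_succ_odd (k : ℕ) (hk : k % 2 = 1) :
    A (k+1) = A k - (B k - A k + 1) - 1 ∧ B (k+1) = B k := by
  simp only [A, B, tmBnd_succ, if_neg (by omega : ¬ k % 2 = 0)]
  exact ⟨trivial, trivial⟩

lemma tmVal_succ (f : ℕ → Bool) (k : ℕ) (j : ℤ) : tmVal f (k+1) j =
    if k % 2 = 0 then
      if j ≤ B k then tmVal f k j
      else if j = B k + 1 then f k
      else ! tmVal f k (j - (B k + 2) + A k)
    else
      if A k ≤ j then tmVal f k j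
      else if j = A k - 1 then f k
      else ! tmVal f k (j + (B k - A k + 1) + 1) := rfl

lemma len (k : ℕ) : B k - A k + 2 = 2 ^ (k + 2) := by
  induction k with
  | zero => rfl
  | succ k ih =>
    have h2 : (2:ℤ) ^ (k+1+2) = 2 * 2 ^ (k+2) := by ring
    rcases Nat.even_or_odd k with hk | hk
    · obtain ⟨e1, e2⟩ := tmBnd_succ_even k (Nat.even_iff.mp hk)
      omega
    · obtain ⟨e1, e2⟩ := tmBnd_succ_odd k (Nat.odd_iff.mp hk)
      omega

lemma pow_pos' (k : ℕ) : (0:ℤ) < 2 ^ (k+2) := by positivity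

lemma a_succ_le (k : ℕ) : A (k+1) ≤ A k := by
  have := len k; have := pow_pos' k
  rcases Nat.even_or_odd k with hk | hk
  · obtain ⟨e1, e2⟩ := tmBnd_succ_even k (Nat.even_iff.mp hk); omega
  · obtain ⟨e1, e2⟩ := tmBnd_succ_odd k (Nat.odd_iff.mp hk); omega

lemma b_le_succ (k : ℕ) : B k ≤ B (k+1) := by
  have := len k; have := pow_pos' k
  rcases Nat.even_or_odd k with hk | hk
  · obtain ⟨e1, e2⟩ := tmBnd_succ_even k (Nat.even_iff.mp hk); omega
  · obtain ⟨e1, e2⟩ := tmBnd_succ_odd k (Nat.odd_iff.mp hk); omega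

lemma a_antitone {k l : ℕ} (h : k ≤ l) : A l ≤ A k := by
  induction l with
  | zero => have : k = 0 := Nat.le_zero.mp h; simp [this]
  | succ l ih =>
    rcases Nat.lt_or_ge k (l+1) with h' | h'
    · exact le_trans (a_succ_le l) (ih (Nat.lt_succ_iff.mp h'))
    · have : k = l + 1 := le_antisymm h h'
      simp [this]

lemma b_mono {k l : ℕ} (h : k ≤ l) : B k ≤ B l := by
  induction l with
  | zero => have : k = 0 := Nat.le_zero.mp h; simp [this]
  | succ l ih =>
    rcases Nat.lt_or_ge k (l+1) with h' | h'
    · exact le_trans (ih (Nat.lt_succ_iff.mp h')) (b_le_succ l)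
    · have : k = l + 1 := le_antisymm h h'
      simp [this]

lemma growth (i : ℕ) : A (2*i) ≤ -(i:ℤ) ∧ (i:ℤ) ≤ B (2*i) := by
  induction i with
  | zero => constructor <;> norm_num [A, B, tmBnd]
  | succ i ih =>
    have e1 : 2 * (i+1) = (2*i+1) + 1 := by ring
    have l0 := len (2*i); have p0 := pow_pos' (2*i)
    have l1 := len (2*i+1); have p1 := pow_pos' (2*i+1)
    obtain ⟨e2, e3⟩ := tmBnd_succ_even (2*i) (by omega)
    obtain ⟨e4, e5⟩ := tmBnd_succ_odd (2*i+1) (by omega)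
    rw [e1]
    omega

lemma tmVal_stable (f : ℕ → Bool) (k : ℕ) (j : ℤ) (h1 : A k ≤ j) (h2 : j ≤ B k) :
    tmVal f (k+1) j = tmVal f k j := by
  rw [tmVal_succ]
  split_ifs <;> first | rfl | (exfalso; omega)

lemma tmVal_stableUp (f : ℕ → Bool) {k l : ℕ} (hkl : k ≤ l) (j : ℤ) (h1 : A k ≤ j)
    (h2 : j ≤ B k) : tmVal f l j = tmVal f k j := by
  induction l with
  | zero => have : k = 0 := Nat.le_zero.mp hkl; simp [this]
  | succ l ih =>
    rcases Nat.lt_or_ge k (l+1) with h' | h'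
    · have hk : k ≤ l := Nat.lt_succ_iff.mp h'
      rw [tmVal_stable f l j (le_trans (a_antitone hk) h1) (le_trans h2 (b_mono hk))]
      exact ih hk
    · have : k = l + 1 := le_antisymm hkl h'
      simp [this]

lemma mem_dom_natAbs (j : ℤ) :
    A (2 * j.natAbs + 2) ≤ j ∧ j ≤ B (2 * j.natAbs + 2) := by
  have h := growth (j.natAbs + 1)
  have e : 2 * (j.natAbs + 1) = 2 * j.natAbs + 2 := by ring
  rw [e] at h
  omega

lemma chi_eq (f : ℕ → Bool) (k : ℕ) (j : ℤ) (h1 : A k ≤ j) (h2 : j ≤ B k) :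
    chi f j = tmVal f k j := by
  obtain ⟨hj1, hj2⟩ := mem_dom_natAbs j
  rcases le_total k (2 * j.natAbs + 2) with h | h
  · exact tmVal_stableUp f h j h1 h2
  · exact (tmVal_stableUp f h j hj1 hj2).symm

lemma chi_flip_even (f : ℕ → Bool) (k : ℕ) (hk : k % 2 = 0) (x : ℤ)
    (h1 : A k ≤ x) (h2 : x ≤ B k) :
    chi f (x + (B k - A k + 2)) = ! chi f x := by
  obtain ⟨e1, e2⟩ := tmBnd_succ_even k hk
  have hl := len k; have hp := pow_pos' k
  rw [chi_eq f (k+1) _ (by omega) (by omega), chi_eq f k x h1 h2, tmVal_succ, if_pos hk,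
    if_neg (by omega), if_neg (by omega)]
  have harg : x + (B k - A k + 2) - (B k + 2) + A k = x := by ring
  rw [harg]

lemma chi_flip_odd (f : ℕ → Bool) (k : ℕ) (hk : k % 2 = 1) (x : ℤ)
    (h1 : A k ≤ x) (h2 : x ≤ B k) :
    chi f (x - (B k - A k + 2)) = ! chi f x := by
  obtain ⟨e1, e2⟩ := tmBnd_succ_odd k hk
  have hl := len k; have hp := pow_pos' k
  rw [chi_eq f (k+1) _ (by omega) (by omega), chi_eq f k x h1 h2, tmVal_succ,
    if_neg (by omega), if_neg (by omega), if_neg (by omega)]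
  have harg : x - (B k - A k + 2) + (B k - A k + 1) + 1 = x := by ring
  rw [harg]

lemma dvd_a (K m : ℕ) : (2 ^ (K+2) : ℤ) ∣ (A (K + m) - A K) := by
  induction m with
  | zero => simp
  | succ m ih =>
    have hl := len (K + m)
    have hd : (2 ^ (K+2) : ℤ) ∣ 2 ^ (K + m + 2) := pow_dvd_pow 2 (by omega)
    have hKm : K + (m + 1) = (K + m) + 1 := rfl
    rcases Nat.even_or_odd (K + m) with hp | hp
    · obtain ⟨e1, _⟩ := tmBnd_succ_even (K + m) (Nat.even_iff.mp hp)
      rw [hKm, e1]; exact ih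
    · obtain ⟨e1, _⟩ := tmBnd_succ_odd (K + m) (Nat.odd_iff.mp hp)
      have e : A (K + (m+1)) - A K = (A (K+m) - A K) - 2 ^ (K + m + 2) := by
        rw [hKm, e1]; omega
      rw [e]
      exact dvd_sub ih hd


lemma block (f : ℕ → Bool) (K : ℕ) (m : ℕ) :
    ∀ t : ℤ, A (K + m) ≤ A K + t * 2 ^ (K+2) → B K + t * 2 ^ (K+2) ≤ B (K + m) →
    ∃ ε : Bool, ∀ j : ℤ, A K ≤ j → j ≤ B K →
      chi f (j + t * 2 ^ (K+2)) = xor ε (chi f j) := by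
  induction m with
  | zero =>
    intro t h1 h2
    have hP := pow_pos' K
    simp only [Nat.add_zero] at h1 h2
    have htz : t * 2 ^ (K+2) = 0 := le_antisymm (by linarith) (by linarith)
    refine ⟨false, fun j _ _ => ?_⟩
    rw [htz, add_zero]
    simp
  | succ m ih =>
    intro t h1 h2
    have hP := pow_pos' K
    have hKm : K + (m+1) = (K+m)+1 := rfl
    have hlK := len K
    have hlk := len (K+m)
    obtain ⟨q0, hq0⟩ := dvd_a K m
    rw [mul_comm] at hq0
    have hee : (2:ℤ) ^ (K+m+2) = 2 ^ m * 2 ^ (K+2) := by ring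
    have hem : (0:ℤ) < 2 ^ m := by positivity
    rw [hKm] at h1 h2
    rcases Nat.even_or_odd (K+m) with hpar | hpar
    · have hp : (K+m) % 2 = 0 := Nat.even_iff.mp hpar
      obtain ⟨ea, eb⟩ := tmBnd_succ_even (K+m) hp
      rw [ea] at h1
      rw [eb] at h2
      by_cases hc : B K + t * 2 ^ (K+2) ≤ B (K+m)
      · exact ih t h1 hc
      · push_neg at hc
        have ht1 : q0 + 2 ^ m ≤ t := by
          have hmul : (q0 + 2 ^ m) * 2 ^ (K+2) < (t + 1) * 2 ^ (K+2) := by nlinarith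
          have := lt_of_mul_lt_mul_right hmul (le_of_lt hP)
          omega
        have c1 : A (K+m) ≤ A K + (t - 2 ^ m) * 2 ^ (K+2) := by
          have hmul : q0 * 2 ^ (K+2) ≤ (t - 2 ^ m) * 2 ^ (K+2) :=
            mul_le_mul_of_nonneg_right (by omega) (le_of_lt hP)
          nlinarith
        have c2 : B K + (t - 2 ^ m) * 2 ^ (K+2) ≤ B (K+m) := by
          have ht2 : t + 1 ≤ q0 + 2 ^ m + 2 ^ m := by
            have hmul : (t + 1) * 2 ^ (K+2) ≤ (q0 + 2 ^ m + 2 ^ m) * 2 ^ (K+2) := by nlinarith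
            exact le_of_mul_le_mul_right hmul hP
          have hmul : (t - 2 ^ m + 1) * 2 ^ (K+2) ≤ (q0 + 2 ^ m) * 2 ^ (K+2) :=
            mul_le_mul_of_nonneg_right (by omega) (le_of_lt hP)
          nlinarith
        obtain ⟨ε, hε⟩ := ih (t - 2 ^ m) c1 c2
        refine ⟨!ε, fun j hj1 hj2 => ?_⟩
        have hx1 : A (K+m) ≤ j + (t - 2 ^ m) * 2 ^ (K+2) := by linarith
        have hx2 : j + (t - 2 ^ m) * 2 ^ (K+2) ≤ B (K+m) := by linarith
        have hf := chi_flip_even f (K+m) hp _ hx1 hx2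
        have harg : j + (t - 2 ^ m) * 2 ^ (K+2) + (B (K+m) - A (K+m) + 2) = j + t * 2 ^ (K+2) := by
          rw [hlk, hee]; ring
        rw [harg] at hf
        rw [hf, hε j hj1 hj2]
        cases ε <;> cases chi f j <;> rfl
    · have hp : (K+m) % 2 = 1 := Nat.odd_iff.mp hpar
      obtain ⟨ea, eb⟩ := tmBnd_succ_odd (K+m) hp
      rw [ea] at h1
      rw [eb] at h2
      by_cases hc : A (K+m) ≤ A K + t * 2 ^ (K+2)
      · exact ih t hc h2
      · push_neg at hc
        have ht1 : t + 1 ≤ q0 := by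
          have hmul : t * 2 ^ (K+2) < q0 * 2 ^ (K+2) := by nlinarith
          have := lt_of_mul_lt_mul_right hmul (le_of_lt hP)
          omega
        have c1 : A (K+m) ≤ A K + (t + 2 ^ m) * 2 ^ (K+2) := by
          have ht2 : q0 - 2 ^ m ≤ t := by
            have hmul : (q0 - 2 ^ m) * 2 ^ (K+2) ≤ t * 2 ^ (K+2) := by nlinarith
            exact le_of_mul_le_mul_right hmul hP
          have hmul : q0 * 2 ^ (K+2) ≤ (t + 2 ^ m) * 2 ^ (K+2) :=
            mul_le_mul_of_nonneg_right (by omega) (le_of_lt hP)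
          nlinarith
        have c2 : B K + (t + 2 ^ m) * 2 ^ (K+2) ≤ B (K+m) := by
          have hmul : (t + 2 ^ m + 1) * 2 ^ (K+2) ≤ (q0 + 2 ^ m) * 2 ^ (K+2) :=
            mul_le_mul_of_nonneg_right (by omega) (le_of_lt hP)
          nlinarith
        obtain ⟨ε, hε⟩ := ih (t + 2 ^ m) c1 c2
        refine ⟨!ε, fun j hj1 hj2 => ?_⟩
        have hx1 : A (K+m) ≤ j + (t + 2 ^ m) * 2 ^ (K+2) := by linarith
        have hx2 : j + (t + 2 ^ m) * 2 ^ (K+2) ≤ B (K+m) := by linarith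
        have hf := chi_flip_odd f (K+m) hp _ hx1 hx2
        have harg : j + (t + 2 ^ m) * 2 ^ (K+2) - (B (K+m) - A (K+m) + 2) = j + t * 2 ^ (K+2) := by
          rw [hlk, hee]; ring
        rw [harg] at hf
        rw [hf, hε j hj1 hj2]
        cases ε <;> cases chi f j <;> rfl

theorem statement17' (f : ℕ → Bool) : FinitelyPerfect (chi f) := by
  intro c d
  obtain ⟨hg1, hg2⟩ := growth (c.natAbs + d.natAbs + 1)
  set i := c.natAbs + d.natAbs + 1 with hi
  set k0 := 2 * i with hk0def
  have hk0p : k0 % 2 = 0 := by omega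
  have hcA : A k0 ≤ c := by omega
  have hdB : d ≤ B k0 := by omega
  have hl0 := len k0
  have hl1 := len (k0+1)
  have hX := pow_pos' (k0+1)
  have hr := pow_pos' k0
  obtain ⟨eA, eB⟩ := tmBnd_succ_even k0 hk0p
  refine ⟨2 ^ (k0 + 1 + 2 + 1), ?_⟩
  intro c' d' hlen
  have hcast : ((2 ^ (k0+1+2+1) : ℕ) : ℤ) = 2 * 2 ^ (k0+1+2) := by push_cast; ring
  rw [hcast] at hlen
  set t : ℤ := (c' - A (k0+1)) / 2 ^ (k0+1+2) + 1 with htdef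
  have hdm := Int.mul_ediv_add_emod (c' - A (k0+1)) (2 ^ (k0+1+2))
  have hm1 := Int.emod_nonneg (c' - A (k0+1)) (ne_of_gt hX)
  have hm2 := Int.emod_lt_of_pos (c' - A (k0+1)) hX
  have htX : t * 2 ^ (k0+1+2) =
      2 ^ (k0+1+2) * ((c' - A (k0+1)) / 2 ^ (k0+1+2)) + 2 ^ (k0+1+2) := by
    rw [htdef]; ring
  have ht1 : c' - A (k0+1) < t * 2 ^ (k0+1+2) := by linarith
  have ht2 : t * 2 ^ (k0+1+2) ≤ c' - A (k0+1) + 2 ^ (k0+1+2) := by linarith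
  -- choose the level M = 2*N
  set Y1 := A (k0+1) + t * 2 ^ (k0+1+2) with hY1
  set Y2 := B (k0+1) + t * 2 ^ (k0+1+2) with hY2
  set N := Y1.natAbs + Y2.natAbs + k0 + 2 with hN
  obtain ⟨hgA, hgB⟩ := growth N
  have hKM : k0 + 1 ≤ 2 * N := by omega
  have hidx : (k0+1) + (2*N - (k0+1)) = 2*N := by omega
  have hb1 : A ((k0+1) + (2*N - (k0+1))) ≤ A (k0+1) + t * 2 ^ ((k0+1)+2) := by
    rw [hidx]; omega
  have hb2 : B (k0+1) + t * 2 ^ ((k0+1)+2) ≤ B ((k0+1) + (2*N - (k0+1))) := by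
    rw [hidx]; omega
  obtain ⟨ε, hε⟩ := block f (k0+1) (2*N - (k0+1)) t hb1 hb2
  cases ε with
  | false =>
    refine ⟨t * 2 ^ (k0+1+2), by linarith, by linarith, fun j hj1 hj2 => ?_⟩
    have := hε j (by omega) (by omega)
    simp only [Bool.false_xor] at this
    exact this.symm
  | true =>
    refine ⟨t * 2 ^ (k0+1+2) + (B k0 - A k0 + 2), by linarith, by linarith,
      fun j hj1 hj2 => ?_⟩
    have e1 : j + (t * 2 ^ (k0+1+2) + (B k0 - A k0 + 2))
        = (j + (B k0 - A k0 + 2)) + t * 2 ^ (k0+1+2) := by ring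
    rw [e1, hε (j + (B k0 - A k0 + 2)) (by omega) (by omega),
      chi_flip_even f k0 hk0p j (by omega) (by omega)]
    cases chi f j <;> rfl

end TMP

/-- every generalized Thue–Morse sequence is finitely perfect. -/
theorem statement17 (f : ℕ → Bool) : FinitelyPerfect (chi f) :=
  TMP.statement17' f
end
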